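/- Let (𝒦_t)_{t∈ℝ} be a family of linear maps on n×n complex matrices satisfying ‖𝒦_t ρ‖₁ ≤ κ ‖ρ‖₁ for all t and all ρ, let H be a matrix, ρ a density matrix, and t ≥ 0. Then the n-th order term of the Dyson expansion obeys |Tr(H ∫_0^t dt₁ ∫_0^{t₁} dt₂ ⋯ ∫_0^{t_{n−1}} dt_n 𝒦_{t₁} 𝒦_{t₂} ⋯ 𝒦_{t_n} ρ)| ≤ ‖H‖_∞ (κ t)^n / n!, and consequently the sum of all terms of order n ≥ 2 is bounded by ‖H‖_∞ (e^{κt} − 1 − κt). -/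

import Mathlib

open MeasureTheory Matrix
open scoped ComplexOrder

noncomputable section

attribute [local instance] Matrix.frobeniusNormedAddCommGroup Matrix.frobeniusNormedSpace

/-- The positive semidefinite square root of a positive semidefinite matrix
(the definition `Matrix.PosSemidef.sqrt` of the older Mathlib, since removed). -/
def Matrix.PosSemidef.sqrt {n : Type*} [Fintype n] [DecidableEq n] {𝕜 : Type*} [RCLike 𝕜]
    {A : Matrix n n 𝕜} (hA : A.PosSemidef) : Matrix n n 𝕜 :=
  hA.isHermitian.eigenvectorUnitary.1 * diagonal ((↑) ∘ (√·) ∘ hA.isHermitian.eigenvalues) *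
  (star hA.isHermitian.eigenvectorUnitary : Matrix n n 𝕜)

/-- The trace norm `‖A‖₁ = Tr √(A†A)` of a complex matrix. -/
def traceNorm {n : ℕ} (A : Matrix (Fin n) (Fin n) ℂ) : ℝ :=
  ((Matrix.posSemidef_conjTranspose_mul_self A).sqrt).trace.re

/-- The operator norm `‖A‖_∞` (largest singular value) of a complex matrix. -/
def opNorm {n : ℕ} (A : Matrix (Fin n) (Fin n) ℂ) : ℝ :=
  ‖Matrix.toEuclideanCLM (𝕜 := ℂ) A‖

/-- The `k`-th order term of the Dyson expansion,
`dyson K ρ k t = ∫_0^t dt₁ ∫_0^{t₁} dt₂ ⋯ ∫_0^{t_{k−1}} dt_k 𝒦_{t₁} 𝒦_{t₂} ⋯ 𝒦_{t_k} ρ`,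
defined recursively as an iterated Bochner integral over the simplex. -/
def dyson {n : ℕ} (K : ℝ → Matrix (Fin n) (Fin n) ℂ →ₗ[ℂ] Matrix (Fin n) (Fin n) ℂ)
    (ρ : Matrix (Fin n) (Fin n) ℂ) : ℕ → ℝ → Matrix (Fin n) (Fin n) ℂ
  | 0, _ => ρ
  | k + 1, t => ∫ s in Set.Ioc (0 : ℝ) t, K s (dyson K ρ k s)

/-!
Trace-norm duality `‖X‖₁ = max {|Tr(W X)| : ‖W‖_∞ ≤ 1}` (Hölder's inequality, with the maximum
attained through the polar decomposition) lets the trace norm pass under the Bochner integral: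
`‖∫ f‖₁ ≤ ∫ ‖f‖₁`. Induction over the simplex then gives `‖dyson K ρ k t‖₁ ≤ (κt)ᵏ/k! · ‖ρ‖₁`,
Hölder once more bounds `|Tr(H ·)|`, and the terms of order `≥ 2` are dominated by the tail
`e^{κt} − 1 − κt` of the exponential series.
-/

open scoped InnerProductSpace MatrixOrder Nat

section Spectral

variable {ι 𝕜 : Type*} [Fintype ι] [DecidableEq ι] [RCLike 𝕜]

lemma Matrix.trace_eq_sum_inner_toEuclideanCLM (A : Matrix ι ι 𝕜)
    (b : OrthonormalBasis ι 𝕜 (EuclideanSpace 𝕜 ι)) :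
    A.trace = ∑ j, ⟪b j, toEuclideanCLM (𝕜 := 𝕜) A (b j)⟫_𝕜 :=
  calc A.trace = LinearMap.trace 𝕜 _ (toLpLin 2 2 A) := by
        rw [toLpLin_eq_toLin, LinearMap.trace_eq_matrix_trace 𝕜 (PiLp.basisFun 2 𝕜 ι),
          LinearMap.toMatrix_toLin]
    _ = _ := LinearMap.trace_eq_sum_inner _ b

lemma Matrix.IsHermitian.trace_cfc {A : Matrix ι ι 𝕜} (hA : A.IsHermitian) (f : ℝ → ℝ) :
    (cfc f A).trace = ∑ i, (f (hA.eigenvalues i) : 𝕜) := by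
  rw [hA.cfc_eq, IsHermitian.cfc, Unitary.conjStarAlgAut_apply, trace_mul_cycle,
    Unitary.coe_star_mul_self, one_mul, trace_diagonal]
  rfl

lemma Matrix.PosSemidef.sqrt_eq_cfc {A : Matrix ι ι 𝕜} (hA : A.PosSemidef) :
    hA.sqrt = cfc Real.sqrt A :=
  (hA.isHermitian.cfc_eq _).symm

lemma Matrix.IsHermitian.toEuclideanCLM_eigenvectorBasis {A : Matrix ι ι 𝕜} (hA : A.IsHermitian)
    (j : ι) :
    toEuclideanCLM (𝕜 := 𝕜) A (hA.eigenvectorBasis j) =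
      (hA.eigenvalues j : 𝕜) • hA.eigenvectorBasis j := by
  rw [← WithLp.toLp_ofLp 2 (hA.eigenvectorBasis j), toEuclideanCLM_toLp,
    hA.mulVec_eigenvectorBasis, RCLike.real_smul_eq_coe_smul (K := 𝕜)]
  rfl

lemma Matrix.norm_toEuclideanCLM_eigenvectorBasis (X : Matrix ι ι 𝕜) (j : ι) :
    ‖toEuclideanCLM (𝕜 := 𝕜) X
        ((posSemidef_conjTranspose_mul_self X).isHermitian.eigenvectorBasis j)‖ =
      √((posSemidef_conjTranspose_mul_self X).isHermitian.eigenvalues j) := by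
  set hA := (posSemidef_conjTranspose_mul_self X).isHermitian
  set v := hA.eigenvectorBasis j
  have hsq : ‖toEuclideanCLM (𝕜 := 𝕜) X v‖ ^ 2 = hA.eigenvalues j := by
    rw [@norm_sq_eq_re_inner 𝕜, ← ContinuousLinearMap.adjoint_inner_right,
      ← ContinuousLinearMap.star_eq_adjoint, ← map_star, ← mul_apply_eq_comp,
      ← map_mul, star_eq_conjTranspose, hA.toEuclideanCLM_eigenvectorBasis, inner_smul_right,
      inner_self_eq_norm_sq_to_K, hA.eigenvectorBasis.orthonormal.1 j]
    simp
  rw [← hsq, Real.sqrt_sq (norm_nonneg _)]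

end Spectral

section TraceNorm

variable {n : ℕ}

lemma traceNorm_eq_sum_sqrt_eigenvalues (X : Matrix (Fin n) (Fin n) ℂ) :
    traceNorm X = ∑ i, √((posSemidef_conjTranspose_mul_self X).isHermitian.eigenvalues i) := by
  rw [traceNorm, PosSemidef.sqrt_eq_cfc,
    (posSemidef_conjTranspose_mul_self X).isHermitian.trace_cfc, Complex.re_sum]
  rfl

lemma ofReal_traceNorm (X : Matrix (Fin n) (Fin n) ℂ) :
    (traceNorm X : ℂ) = (cfc Real.sqrt (Xᴴ * X)).trace := by
  rw [traceNorm_eq_sum_sqrt_eigenvalues,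
    (posSemidef_conjTranspose_mul_self X).isHermitian.trace_cfc, Complex.ofReal_sum]
  rfl

lemma traceNorm_nonneg (X : Matrix (Fin n) (Fin n) ℂ) : 0 ≤ traceNorm X := by
  rw [traceNorm_eq_sum_sqrt_eigenvalues]
  positivity

lemma traceNorm_of_posSemidef {ρ : Matrix (Fin n) (Fin n) ℂ} (hρ : ρ.PosSemidef) :
    traceNorm ρ = ρ.trace.re := by
  rw [traceNorm, PosSemidef.sqrt_eq_cfc, ← cfcₙ_eq_cfc,
    ← CFC.sqrt_eq_real_sqrt _ (posSemidef_conjTranspose_mul_self ρ).nonneg, hρ.1.eq,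
    CFC.sqrt_mul_self ρ hρ.nonneg]

lemma traceNorm_zero : traceNorm (0 : Matrix (Fin n) (Fin n) ℂ) = 0 := by
  simp [traceNorm_of_posSemidef PosSemidef.zero]

theorem norm_trace_mul_le (H X : Matrix (Fin n) (Fin n) ℂ) :
    ‖(H * X).trace‖ ≤ opNorm H * traceNorm X := by
  set b := (posSemidef_conjTranspose_mul_self X).isHermitian.eigenvectorBasis
  rw [trace_eq_sum_inner_toEuclideanCLM _ b, traceNorm_eq_sum_sqrt_eigenvalues, Finset.mul_sum]
  refine (norm_sum_le _ _).trans (Finset.sum_le_sum fun j _ => ?_)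
  rw [← norm_toEuclideanCLM_eigenvectorBasis, map_mul]
  calc _ ≤ ‖b j‖ * ‖toEuclideanCLM (𝕜 := ℂ) H (toEuclideanCLM (𝕜 := ℂ) X (b j))‖ :=
        norm_inner_le_norm _ _
    _ ≤ opNorm H * ‖toEuclideanCLM (𝕜 := ℂ) X (b j)‖ := by
        rw [b.orthonormal.1 j, one_mul]
        exact ContinuousLinearMap.le_opNorm _ _

lemma opNorm_le_one_of_mul_conjTranspose_le_one {W : Matrix (Fin n) (Fin n) ℂ}
    (hW : W * Wᴴ ≤ 1) : opNorm W ≤ 1 := by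
  set T := toEuclideanCLM (𝕜 := ℂ) W
  have hT : T * star T ≤ 1 := by
    have := OrderHomClass.mono (toEuclideanCLM (𝕜 := ℂ)) hW
    rwa [← star_eq_conjTranspose, map_mul, map_star, map_one] at this
  have hT' : ‖T‖ * ‖T‖ ≤ 1 := by
    rw [← CStarRing.norm_self_mul_star]
    exact (CStarAlgebra.norm_le_one_iff_of_nonneg _ (mul_star_self_nonneg T)).2 hT
  change ‖T‖ ≤ 1
  nlinarith [norm_nonneg T]

theorem exists_opNorm_le_one_trace_mul_eq_traceNorm (X : Matrix (Fin n) (Fin n) ℂ) :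
    ∃ W : Matrix (Fin n) (Fin n) ℂ, opNorm W ≤ 1 ∧ (W * X).trace = traceNorm X := by
  set A := Xᴴ * X
  have hA : IsSelfAdjoint A := (posSemidef_conjTranspose_mul_self X).isHermitian
  have hcont (f : ℝ → ℝ) : ContinuousOn f (spectrum ℝ A) :=
    A.finite_real_spectrum.continuousOn f
  -- `G = |X|⁺` is the pseudo-inverse of `|X| = √(XᴴX)`, as `0⁻¹ = 0`; the witness `W = G Xᴴ` is
  -- the adjoint of the partial isometry in the polar decomposition `X = U |X|`.
  set G := cfc (fun x => (√x)⁻¹) A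
  have hG : Gᴴ = G := (cfc_predicate _ A : IsSelfAdjoint G).star_eq
  refine ⟨G * Xᴴ, opNorm_le_one_of_mul_conjTranspose_le_one ?_, ?_⟩
  · have hWW : G * Xᴴ * (G * Xᴴ)ᴴ = cfc (fun x => (√x)⁻¹ * x * (√x)⁻¹) A := by
      rw [conjTranspose_mul, conjTranspose_conjTranspose, hG, cfc_mul _ _ A (hcont _) (hcont _),
        cfc_mul _ _ A (hcont _) (hcont _), cfc_id' ℝ A]
      simp only [A, G, Matrix.mul_assoc]
    rw [hWW]
    refine cfc_le_one _ _ fun x _ => ?_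
    rcases le_or_gt x 0 with hx | hx
    · simp [Real.sqrt_eq_zero'.2 hx]
    · rw [mul_right_comm, ← mul_inv, ← sq, Real.sq_sqrt hx.le, inv_mul_cancel₀ hx.ne']
  · have hWX : G * Xᴴ * X = cfc Real.sqrt A := by
      have hGA : G * A = cfc (fun x => (√x)⁻¹ * x) A := by
        rw [cfc_mul _ _ A (hcont _) (hcont _), cfc_id' ℝ A]
      rw [Matrix.mul_assoc, hGA]
      refine cfc_congr fun x _ => ?_
      rcases le_or_gt x 0 with hx | hx
      · simp [Real.sqrt_eq_zero'.2 hx]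
      · rw [inv_mul_eq_div, div_eq_iff (Real.sqrt_pos.2 hx).ne', Real.mul_self_sqrt hx.le]
    rw [hWX, ofReal_traceNorm]

lemma traceNorm_integral_le {α : Type*} [MeasurableSpace α] {μ : Measure α}
    {f : α → Matrix (Fin n) (Fin n) ℂ} {g : α → ℝ} (hg : Integrable g μ)
    (hfg : ∀ᵐ x ∂μ, traceNorm (f x) ≤ g x) : traceNorm (∫ x, f x ∂μ) ≤ ∫ x, g x ∂μ := by
  by_cases hf0 : ∫ x, f x ∂μ = 0
  · rw [hf0, traceNorm_zero]
    exact integral_nonneg_of_ae (hfg.mono fun x hx => (traceNorm_nonneg _).trans hx)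
  · obtain ⟨W, hW, htr⟩ := exists_opNorm_le_one_trace_mul_eq_traceNorm (∫ x, f x ∂μ)
    let L : Matrix (Fin n) (Fin n) ℂ →L[ℂ] ℂ := LinearMap.toContinuousLinearMap
      ((traceLinearMap (Fin n) ℂ ℂ).comp (LinearMap.mulLeft ℂ W))
    have hL : (W * ∫ x, f x ∂μ).trace = ∫ x, (W * f x).trace ∂μ :=
      (L.integral_comp_comm (Integrable.of_integral_ne_zero hf0)).symm
    rw [← Complex.norm_of_nonneg (traceNorm_nonneg _), ← htr, hL]
    refine norm_integral_le_of_norm_le hg (hfg.mono fun x hx => ?_)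
    calc ‖(W * f x).trace‖ ≤ opNorm W * traceNorm (f x) := norm_trace_mul_le _ _
      _ ≤ traceNorm (f x) := mul_le_of_le_one_left (traceNorm_nonneg _) hW
      _ ≤ g x := hx

end TraceNorm

lemma traceNorm_dyson_le {n : ℕ}
    {K : ℝ → Matrix (Fin n) (Fin n) ℂ →ₗ[ℂ] Matrix (Fin n) (Fin n) ℂ}
    {κ : ℝ} (hκ : 0 ≤ κ) (hK : ∀ t ρ, traceNorm (K t ρ) ≤ κ * traceNorm ρ)
    (ρ : Matrix (Fin n) (Fin n) ℂ) (k : ℕ) {t : ℝ} (ht : 0 ≤ t) :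
    traceNorm (dyson K ρ k t) ≤ (κ * t) ^ k / k ! * traceNorm ρ := by
  induction k generalizing t with
  | zero => simp [dyson]
  | succ k ih =>
    set c := κ ^ (k + 1) / k ! * traceNorm ρ
    have hbound : ∀ s ∈ Set.Ioc 0 t, traceNorm (K s (dyson K ρ k s)) ≤ c * s ^ k := fun s hs =>
      calc _ ≤ κ * traceNorm (dyson K ρ k s) := hK _ _
        _ ≤ κ * ((κ * s) ^ k / k ! * traceNorm ρ) := by gcongr; exact ih hs.1.le
        _ = c * s ^ k := by ring
    calc traceNorm (dyson K ρ (k + 1) t) ≤ ∫ s in Set.Ioc 0 t, c * s ^ k :=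
          traceNorm_integral_le (by fun_prop : Continuous fun s : ℝ => c * s ^ k).integrableOn_Ioc
            (ae_restrict_of_forall_mem measurableSet_Ioc hbound)
      _ = (κ * t) ^ (k + 1) / (k + 1)! * traceNorm ρ := by
          rw [← intervalIntegral.integral_of_le ht, intervalIntegral.integral_const_mul,
            integral_pow, Nat.factorial_succ]
          push_cast [c]
          field_simp
          ring

lemma Real.hasSum_pow_div_factorial_add_two (x : ℝ) :
    HasSum (fun k => x ^ (k + 2) / (k + 2)!) (Real.exp x - 1 - x) := by
  have := (hasSum_nat_add_iff' 2).2 (NormedSpace.expSeries_div_hasSum_exp x)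
  simpa [← Real.exp_eq_exp_ℝ, Finset.sum_range_succ, sub_sub] using this

/-- Bounds on the Dyson-expansion terms: if `‖𝒦_t ρ‖₁ ≤ κ‖ρ‖₁` for all
`t, ρ`, then `|Tr(H · (k-th order term))| ≤ ‖H‖_∞ (κt)^k / k!`, and the sum of all terms of
order `≥ 2` is bounded by `‖H‖_∞ (e^{κt} − 1 − κt)`. -/
theorem dyson_term_bounds
    {n : ℕ} (K : ℝ → Matrix (Fin n) (Fin n) ℂ →ₗ[ℂ] Matrix (Fin n) (Fin n) ℂ)
    (κ : ℝ) (hK : ∀ t ρ, traceNorm (K t ρ) ≤ κ * traceNorm ρ)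
    (H : Matrix (Fin n) (Fin n) ℂ)
    (ρ : Matrix (Fin n) (Fin n) ℂ) (hρ : ρ.PosSemidef) (hρ1 : ρ.trace = 1)
    (t : ℝ) (ht : 0 ≤ t) :
    (∀ k : ℕ, ‖(H * dyson K ρ k t).trace‖ ≤
        opNorm H * (κ * t) ^ k / (Nat.factorial k)) ∧
      (∑' k : ℕ, ‖(H * dyson K ρ (k + 2) t).trace‖) ≤
        opNorm H * (Real.exp (κ * t) - 1 - κ * t) := by
  have hρ_tn : traceNorm ρ = 1 := by rw [traceNorm_of_posSemidef hρ, hρ1, Complex.one_re]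
  have hκ : 0 ≤ κ := by simpa [hρ_tn] using (traceNorm_nonneg _).trans (hK 0 ρ)
  have hterm (k : ℕ) : ‖(H * dyson K ρ k t).trace‖ ≤ opNorm H * (κ * t) ^ k / k ! :=
    calc _ ≤ opNorm H * traceNorm (dyson K ρ k t) := norm_trace_mul_le _ _
      _ ≤ opNorm H * ((κ * t) ^ k / k ! * traceNorm ρ) := by
          gcongr
          · exact norm_nonneg _
          · exact traceNorm_dyson_le hκ hK ρ k ht
      _ = opNorm H * (κ * t) ^ k / k ! := by rw [hρ_tn]; ring
  refine ⟨hterm, ?_⟩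
  have htail := (Real.hasSum_pow_div_factorial_add_two (κ * t)).mul_left (opNorm H)
  have hle (k : ℕ) : ‖(H * dyson K ρ (k + 2) t).trace‖ ≤
      opNorm H * ((κ * t) ^ (k + 2) / (k + 2)!) := (hterm (k + 2)).trans_eq (by ring)
  exact hasSum_le hle (htail.summable.of_nonneg_of_le (fun _ => norm_nonneg _) hle).hasSum htail
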